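/- Let ℓ be divisible by 4 and let (A,B) be a quaternary Legendre pair of length ℓ with Σ_j a_j = 0 and Σ_j b_j = 1+i. Then PSD(A, ℓ/4) ≡ 0 (mod 8). -/

import Mathlib

open Finset

/-- Periodic autocorrelation function of a sequence of length `ℓ`, indices mod `ℓ`. -/
noncomputable def PAF (ℓ : ℕ) (A : ℕ → ℂ) (s : ℕ) : ℂ :=
  ∑ j ∈ Finset.range ℓ, A j * (starRingEnd ℂ) (A ((j + s) % ℓ))

/-- Discrete Fourier transform of a sequence of length `ℓ`. -/
noncomputable def DFT (ℓ : ℕ) (A : ℕ → ℂ) (s : ℕ) : ℂ :=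
  ∑ j ∈ Finset.range ℓ, A j * Complex.exp (2 * Real.pi * Complex.I * j * s / ℓ)

/-- Power spectral density. -/
noncomputable def PSD (ℓ : ℕ) (A : ℕ → ℂ) (s : ℕ) : ℝ :=
  ‖DFT ℓ A s‖ ^ 2

/-- A sequence is quaternary if all its entries (up to length `ℓ`) are fourth roots of unity. -/
def IsQuaternary (ℓ : ℕ) (A : ℕ → ℂ) : Prop :=
  ∀ j < ℓ, A j = 1 ∨ A j = -1 ∨ A j = Complex.I ∨ A j = -Complex.I

/-- `(A, B)` is a quaternary Legendre pair of length `ℓ`. -/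
def IsLegendrePair (ℓ : ℕ) (A B : ℕ → ℂ) : Prop :=
  IsQuaternary ℓ A ∧ IsQuaternary ℓ B ∧
    ∀ s, 1 ≤ s → s ≤ ℓ / 2 → PAF ℓ A s + PAF ℓ B s = -2

/-!
At frequency `ℓ / 4` the DFT kernel is `I ^ j`, so for a quaternary sequence `DFT(A, ℓ/4)` is a
sum of powers of `I`: a Gaussian integer `z_A`, and `PSD(A, ℓ/4) = N(z_A)`. Modulo `2` one has
`I = 1 + ε` with `ε² = 0`, hence `z_A ≡ ∑ A_j + (∑_{j<ℓ} j) ε ≡ 0`, i.e. `2 ∣ z_A` and `4 ∣ N(z_A)`.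
Since `PSD(A, ℓ/4) = ∑_t (-I)^t PAF(A, t)` and `PAF(ℓ - t) = conj PAF(t)`, the Legendre condition
gives `N(z_A) + N(z_B) = 2ℓ + 2 ≡ 2 (mod 8)`; as a norm is never `6` mod `8`, `N(z_A) ≢ 4 (mod 8)`.
-/

open Complex ComplexConjugate GaussianInt Zsqrtd

local notation "ℤ[i]" => GaussianInt

lemma GaussianInt.toComplex_sqrtd : toComplex sqrtd = I := by
  simp [toComplex_def]

lemma one_add_pow_of_sq_eq_zero {R : Type*} [CommRing R] {ε : R} (hε : ε ^ 2 = 0) (n : ℕ) :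
    (1 + ε) ^ n = 1 + n * ε := by
  induction n with
  | zero => simp
  | succ n ih => rw [pow_succ, ih]; push_cast; linear_combination (n : R) * hε

lemma even_sum_range_id {ℓ : ℕ} (hℓ : 4 ∣ ℓ) : Even (∑ j ∈ range ℓ, j) := by
  obtain ⟨k, rfl⟩ := hℓ
  refine ⟨k * (4 * k - 1), Nat.eq_of_mul_eq_mul_right two_pos ?_⟩
  rw [sum_range_id_mul_two]
  ring

lemma GaussianInt.two_dvd_sum_sqrtd_pow_add_sub {ℓ : ℕ} (hℓ : 4 ∣ ℓ) (e : ℕ → ℕ) :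
    (2 : ℤ[i]) ∣ ∑ j ∈ range ℓ, sqrtd ^ (e j + j) - ∑ j ∈ range ℓ, sqrtd ^ e j := by
  set φ := Ideal.Quotient.mk (Ideal.span {(2 : ℤ[i])})
  have h2 : (2 : ℤ[i] ⧸ Ideal.span {(2 : ℤ[i])}) = 0 := by
    rw [← map_ofNat φ 2]; exact (Ideal.Quotient.eq_zero_iff_dvd _ _).2 dvd_rfl
  have hε : (φ sqrtd - 1) ^ 2 = 0 := by
    have : φ sqrtd ^ 2 = -1 := by rw [← map_pow]; simp [sq]
    linear_combination this - φ sqrtd * h2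
  have hpow (n : ℕ) : φ (sqrtd ^ n) = 1 + n * (φ sqrtd - 1) := by
    rw [map_pow, ← one_add_pow_of_sq_eq_zero hε, add_sub_cancel]
  obtain ⟨m, hm⟩ := even_sum_range_id hℓ
  rw [← Ideal.Quotient.eq_zero_iff_dvd, map_sub, map_sum, map_sum, ← sum_sub_distrib]
  calc ∑ j ∈ range ℓ, (φ (sqrtd ^ (e j + j)) - φ (sqrtd ^ e j))
      = ((∑ j ∈ range ℓ, j : ℕ) : ℤ[i] ⧸ Ideal.span {(2 : ℤ[i])}) * (φ sqrtd - 1) := by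
        push_cast [sum_mul, hpow]; exact sum_congr rfl fun j _ ↦ by ring
    _ = 0 := by rw [hm, ← two_mul]; push_cast [h2]; ring

lemma GaussianInt.norm_emod_eight_ne_six (w : ℤ[i]) : w.norm % 8 ≠ 6 := by
  intro h
  have h8 : (w.norm : ZMod 8) = 6 := by rw [← ZMod.intCast_mod, Nat.cast_ofNat, h]; rfl
  rw [Zsqrtd.norm_def] at h8
  push_cast at h8
  generalize (w.re : ZMod 8) = a, (w.im : ZMod 8) = b at h8
  revert a b; decide

lemma GaussianInt.eight_dvd_norm_of_two_dvd {ℓ : ℕ} (hℓ : 4 ∣ ℓ) {z w : ℤ[i]} (hz : 2 ∣ z)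
    (h : z.norm + w.norm = 2 * ℓ + 2) : 8 ∣ z.norm := by
  obtain ⟨v, rfl⟩ := hz
  rw [norm_mul, show norm (2 : ℤ[i]) = 4 by rfl] at h ⊢
  have := norm_emod_eight_ne_six w
  omega

lemma IsQuaternary.exists_eq_I_pow {ℓ : ℕ} {A : ℕ → ℂ} (hA : IsQuaternary ℓ A) :
    ∃ e : ℕ → ℕ, ∀ j < ℓ, A j = I ^ e j := by
  have (a : ℂ) (ha : a = 1 ∨ a = -1 ∨ a = I ∨ a = -I) : ∃ n : ℕ, a = I ^ n := by
    rcases ha with rfl | rfl | rfl | rfl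
    exacts [⟨0, by simp⟩, ⟨2, by simp⟩, ⟨1, by simp⟩, ⟨3, by simp [pow_succ]⟩]
  choose! e he using fun j hj ↦ this (A j) (hA j hj)
  exact ⟨e, he⟩

lemma DFT_div_four {ℓ : ℕ} (hℓ : 4 ∣ ℓ) (A : ℕ → ℂ) :
    DFT ℓ A (ℓ / 4) = ∑ j ∈ range ℓ, A j * I ^ j := by
  obtain ⟨k, rfl⟩ := hℓ
  refine sum_congr rfl fun j hj ↦ ?_
  have hk : (k : ℂ) ≠ 0 := by have := mem_range.1 hj; norm_cast; omega
  have hI : I ^ j = exp (j * (Real.pi / 2 * I)) := by rw [exp_nat_mul, exp_pi_div_two_mul_I]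
  rw [Nat.mul_div_cancel_left k four_pos, hI]
  congr 2
  push_cast
  field_simp
  ring

lemma PSD_div_four_eq_norm {ℓ : ℕ} (hℓ : 4 ∣ ℓ) {A : ℕ → ℂ} {e : ℕ → ℕ}
    (he : ∀ j < ℓ, A j = I ^ e j) :
    PSD ℓ A (ℓ / 4) = (∑ j ∈ range ℓ, (sqrtd : ℤ[i]) ^ (e j + j)).norm := by
  have hDFT : DFT ℓ A (ℓ / 4) = toComplex (∑ j ∈ range ℓ, sqrtd ^ (e j + j)) := by
    rw [DFT_div_four hℓ, map_sum]
    refine sum_congr rfl fun j hj ↦ ?_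
    rw [he j (mem_range.1 hj), map_pow, toComplex_sqrtd, pow_add]
  rw [PSD, hDFT, intCast_real_norm, Complex.sq_norm]

lemma sum_range_add_mod {M : Type*} [AddCommMonoid M] (ℓ t : ℕ) (f : ℕ → M) :
    ∑ j ∈ range ℓ, f ((j + t) % ℓ) = ∑ j ∈ range ℓ, f j := by
  rcases ℓ with _ | n
  · simp
  simp only [← Fin.sum_univ_eq_sum_range]
  exact Fintype.sum_equiv (Equiv.addRight (Fin.ofNat (n + 1) t)) _ _ fun j ↦ by simp [Fin.val_add]

lemma PAF_sub {ℓ t : ℕ} (ht : t ≤ ℓ) (A : ℕ → ℂ) : PAF ℓ A (ℓ - t) = conj (PAF ℓ A t) := by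
  rw [PAF, PAF, map_sum]
  conv_rhs => rw [← sum_range_add_mod ℓ (ℓ - t)]
  refine sum_congr rfl fun j hj ↦ ?_
  have : ((j + (ℓ - t)) % ℓ + t) % ℓ = j := by
    rw [Nat.mod_add_mod, show j + (ℓ - t) + t = j + ℓ by omega, Nat.add_mod_right,
      Nat.mod_eq_of_lt (mem_range.1 hj)]
  rw [this, map_mul, conj_conj, mul_comm]

lemma IsQuaternary.PAF_zero {ℓ : ℕ} {A : ℕ → ℂ} (hA : IsQuaternary ℓ A) : PAF ℓ A 0 = ℓ := by
  have hnorm : ∀ j ∈ range ℓ, A j * conj (A ((j + 0) % ℓ)) = 1 := fun j hj ↦ by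
    rw [add_zero, Nat.mod_eq_of_lt (mem_range.1 hj), mul_conj']
    rcases hA j (mem_range.1 hj) with h | h | h | h <;> simp [h]
  rw [PAF, sum_congr rfl hnorm]
  simp

lemma neg_I_pow_eq_one {ℓ : ℕ} (hℓ : 4 ∣ ℓ) : (-I) ^ ℓ = 1 := by
  obtain ⟨k, rfl⟩ := hℓ
  rw [pow_mul, neg_pow, I_pow_four]
  norm_num

lemma PSD_div_four_eq_sum_PAF {ℓ : ℕ} (hℓ : 4 ∣ ℓ) (A : ℕ → ℂ) :
    (PSD ℓ A (ℓ / 4) : ℂ) = ∑ t ∈ range ℓ, (-I) ^ t * PAF ℓ A t := by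
  have hperiod (n : ℕ) : (-I) ^ (n % ℓ) = (-I) ^ n :=
    (pow_eq_pow_mod n (neg_I_pow_eq_one hℓ)).symm
  rw [PSD, ofReal_pow, ← mul_conj', DFT_div_four hℓ, map_sum, sum_mul_sum]
  simp_rw [PAF, mul_sum]
  conv_rhs => rw [sum_comm]
  refine sum_congr rfl fun m _ ↦ ?_
  conv_lhs => rw [← sum_range_add_mod ℓ m]
  refine sum_congr rfl fun t _ ↦ ?_
  have hunit : I ^ m * (-I) ^ m = 1 := by rw [← mul_pow]; simp
  rw [map_mul, map_pow, conj_I, hperiod, add_comm t m, pow_add]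
  linear_combination (A m * conj (A ((m + t) % ℓ)) * (-I) ^ t) * hunit

lemma IsLegendrePair.PAF_add_PAF {ℓ : ℕ} {A B : ℕ → ℂ} (h : IsLegendrePair ℓ A B) {t : ℕ}
    (ht₀ : 1 ≤ t) (ht : t < ℓ) : PAF ℓ A t + PAF ℓ B t = -2 := by
  by_cases hle : t ≤ ℓ / 2
  · exact h.2.2 t ht₀ hle
  · have hsym := h.2.2 (ℓ - t) (by omega) (by omega)
    rw [PAF_sub ht.le, PAF_sub ht.le, ← map_add] at hsym
    rw [← conj_conj (PAF ℓ A t + PAF ℓ B t), hsym, map_neg, map_ofNat]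

lemma IsLegendrePair.PSD_div_four_add_PSD {ℓ : ℕ} {A B : ℕ → ℂ} (h : IsLegendrePair ℓ A B)
    (hℓ : 4 ∣ ℓ) (hpos : 0 < ℓ) : PSD ℓ A (ℓ / 4) + PSD ℓ B (ℓ / 4) = 2 * ℓ + 2 := by
  have hterm : ∀ t ∈ range ℓ, (-I) ^ t * PAF ℓ A t + (-I) ^ t * PAF ℓ B t =
      -2 * (-I) ^ t + if t = 0 then (2 * ℓ + 2 : ℂ) else 0 := by
    intro t ht
    rcases Nat.eq_zero_or_pos t with rfl | ht₀
    · simp only [pow_zero, h.1.PAF_zero, h.2.1.PAF_zero, if_true]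
      ring
    · rw [if_neg ht₀.ne', ← mul_add, h.PAF_add_PAF ht₀ (mem_range.1 ht)]
      ring
  have hgeom : ∑ t ∈ range ℓ, (-I) ^ t = 0 := by
    rw [geom_sum_eq (by simp [Complex.ext_iff]), neg_I_pow_eq_one hℓ, sub_self, zero_div]
  apply ofReal_injective
  push_cast
  rw [PSD_div_four_eq_sum_PAF hℓ, PSD_div_four_eq_sum_PAF hℓ, ← sum_add_distrib,
    sum_congr rfl hterm, sum_add_distrib, ← mul_sum, hgeom, sum_ite_eq' (range ℓ) 0,
    if_pos (mem_range.2 hpos)]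
  ring

theorem PSD_quarter_mod_eight_general (ℓ : ℕ) (hℓ : 4 ∣ ℓ) (A B : ℕ → ℂ)
    (h : IsLegendrePair ℓ A B)
    (hsumA : ∑ j ∈ Finset.range ℓ, A j = 0) :
    ∃ m : ℤ, PSD ℓ A (ℓ / 4) = ((8 * m : ℤ) : ℝ) := by
  rcases Nat.eq_zero_or_pos ℓ with rfl | hpos
  · exact ⟨0, by simp [PSD, DFT]⟩
  obtain ⟨a, ha⟩ := h.1.exists_eq_I_pow
  obtain ⟨b, hb⟩ := h.2.1.exists_eq_I_pow
  have hsum : (∑ j ∈ range ℓ, (sqrtd : ℤ[i]) ^ a j) = 0 := by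
    rw [← toComplex_eq_zero, map_sum, ← hsumA]
    exact sum_congr rfl fun j hj ↦ by rw [map_pow, toComplex_sqrtd, ha j (mem_range.1 hj)]
  have htwo := two_dvd_sum_sqrtd_pow_add_sub hℓ a
  rw [hsum, sub_zero] at htwo
  have hnorm := h.PSD_div_four_add_PSD hℓ hpos
  rw [PSD_div_four_eq_norm hℓ ha, PSD_div_four_eq_norm hℓ hb] at hnorm
  obtain ⟨m, hm⟩ := eight_dvd_norm_of_two_dvd hℓ htwo (by exact_mod_cast hnorm)
  exact ⟨m, by rw [PSD_div_four_eq_norm hℓ ha, hm]⟩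

theorem PSD_quarter_mod_eight (ℓ : ℕ) (hℓ : 4 ∣ ℓ) (A B : ℕ → ℂ)
    (h : IsLegendrePair ℓ A B)
    (hsumA : ∑ j ∈ Finset.range ℓ, A j = 0)
    (hsumB : ∑ j ∈ Finset.range ℓ, B j = 1 + Complex.I) :
    ∃ m : ℤ, PSD ℓ A (ℓ / 4) = ((8 * m : ℤ) : ℝ) :=
  PSD_quarter_mod_eight_general ℓ hℓ A B h hsumA
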